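/- Consider a finite set of banks N, external assets e : N → ℚ≥0, fixed liabilities l : N → ℚ with l_i > 0 for all i, and assets a_i(r) that are affine functions of the recovery rate vector r ∈ [0,1]^N with nonnegative values. Fix for each i a bound B_i > max over r ∈ [0,1]^N of a_i(r)/l_i, with B_i ≥ 1. Then a vector r ∈ [0,1]^N satisfies r_i = min(1, a_i(r)/l_i) for all i if and only if there exists y ∈ {0,1}^N such that for all i: r_i ≥ a_i(r)/l_i - B_i·(1 - y_i), r_i ≥ 1 - B_i·y_i, r_i ≤ a_i(r)/l_i, and r_i ∈ [0,1]. -/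
import Mathlib


theorem stmt_14 {N : Type*} [Fintype N]
    (e : N → ℝ) (he : ∀ i, 0 ≤ e i)
    (l : N → ℝ) (hl : ∀ i, 0 < l i)
    (M : N → N → ℝ)
    (a : N → (N → ℝ) → ℝ)
    (ha : ∀ i r, a i r = e i + ∑ j, M i j * r j)
    (hanneg : ∀ i (r : N → ℝ), (∀ j, r j ∈ Set.Icc (0:ℝ) 1) → 0 ≤ a i r)
    (B : N → ℝ) (hB1 : ∀ i, 1 ≤ B i)
    (hB : ∀ i (r : N → ℝ), (∀ j, r j ∈ Set.Icc (0:ℝ) 1) → a i r / l i < B i)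
    (r : N → ℝ) (hr : ∀ i, r i ∈ Set.Icc (0:ℝ) 1) :
    (∀ i, r i = min 1 (a i r / l i)) ↔
      ∃ y : N → ℝ, (∀ i, y i = 0 ∨ y i = 1) ∧
        ∀ i, r i ≥ a i r / l i - B i * (1 - y i) ∧ r i ≥ 1 - B i * y i ∧
          r i ≤ a i r / l i ∧ r i ∈ Set.Icc (0:ℝ) 1 := by
  constructor
  · intro h
    refine ⟨fun i => if a i r / l i ≤ 1 then 1 else 0, fun i => by by_cases hc : a i r / l i ≤ 1 <;> simp [hc], fun i => ?_⟩
    have hBi := hB i r hr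
    have hri := hr i
    by_cases hc : a i r / l i ≤ 1
    · simp only [hc, if_pos]
      refine ⟨by simp [h i, min_eq_right hc], ?_, by simp [h i, min_eq_right hc], hri⟩
      have : (1:ℝ) - B i ≤ 0 := by linarith [hB1 i]
      simp only [ge_iff_le]
      linarith [hri.1]
    · simp only [hc, if_neg, not_false_iff]
      push_neg at hc
      have hr1 : r i = 1 := by rw [h i, min_eq_left hc.le]
      refine ⟨?_, by simp [hr1], by rw [hr1]; exact hc.le, hri⟩
      simp only [ge_iff_le, hr1]
      linarith
  · rintro ⟨y, hy01, hy⟩ i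
    obtain ⟨h1, h2, h3, h4⟩ := hy i
    rcases hy01 i with h0 | h0
    · rw [h0] at h2; simp at h2
      have : r i = 1 := le_antisymm h4.2 h2
      rw [this, min_eq_left (this ▸ h3)]
    · rw [h0] at h1; simp at h1
      have : r i = a i r / l i := le_antisymm h3 h1
      rw [this, min_eq_right (this ▸ h4.2)]
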